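/- Let n ≥ 2, let C be an irreducible relative interaction matrix, and let x(0) ∈ Δⁿ \ {e_1, …, e_n}. Then the iterates x(t+1) = F(x(t)) satisfy x(t)_i > 0 for every index i and every time t ≥ n − 1. -/
import Mathlib


/-- The simplex Δⁿ = {x ∈ ℝⁿ : xᵢ ≥ 0, ∑ᵢ xᵢ = 1}. -/
def simplex (n : ℕ) : Set (Fin n → ℝ) :=
  {x | (∀ i, 0 ≤ x i) ∧ ∑ i, x i = 1}

/-- The i-th vertex (standard basis vector) of the simplex. -/
def vertex (n : ℕ) (i : Fin n) : Fin n → ℝ := fun j => if j = i then 1 else 0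

/-- A relative interaction matrix: nonnegative, row-stochastic, zero diagonal. -/
def IsRIM {n : ℕ} (C : Matrix (Fin n) (Fin n) ℝ) : Prop :=
  (∀ i j, 0 ≤ C i j) ∧ (∀ i, ∑ j, C i j = 1) ∧ (∀ i, C i i = 0)

/-- The single-timescale DeGroot–Friedkin map F(x) = Cᵀ(x − x²) + x². -/
noncomputable def DF {n : ℕ} (C : Matrix (Fin n) (Fin n) ℝ) (x : Fin n → ℝ) : Fin n → ℝ :=
  fun i => ∑ j, C j i * (x j - (x j) ^ 2) + (x i) ^ 2

/-- A nonnegative matrix is irreducible if for all i ≠ j some power has positive (i,j) entry. -/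
def Irred {n : ℕ} (C : Matrix (Fin n) (Fin n) ℝ) : Prop :=
  ∀ i j : Fin n, i ≠ j → ∃ k, 1 ≤ k ∧ 0 < (C ^ k) i j

/-- C has star topology: some node i receives weight 1 from every other node. -/
def HasStarTopology {n : ℕ} (C : Matrix (Fin n) (Fin n) ℝ) : Prop :=
  ∃ i : Fin n, ∀ j, j ≠ i → C j i = 1

/-- c is the dominant left eigenvector of C: c ∈ Δⁿ and cᵀ C = cᵀ. -/
def DominantLeftEigenvector {n : ℕ} (C : Matrix (Fin n) (Fin n) ℝ) (c : Fin n → ℝ) : Prop :=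
  c ∈ simplex n ∧ ∀ j, ∑ i, c i * C i j = c j

open Finset

lemma simplex_le_one {n : ℕ} {x : Fin n → ℝ} (hx : x ∈ simplex n) (j : Fin n) : x j ≤ 1 := by
  obtain ⟨h1, h2⟩ := hx
  calc x j ≤ ∑ i, x i := Finset.single_le_sum (fun i _ => h1 i) (Finset.mem_univ j)
  _ = 1 := h2

lemma term_nonneg {n : ℕ} {C : Matrix (Fin n) (Fin n) ℝ} (hC : IsRIM C)
    {x : Fin n → ℝ} (hx : x ∈ simplex n) (j i : Fin n) :
    0 ≤ C j i * (x j - (x j) ^ 2) := by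
  have h0 := hx.1 j
  have h1 := simplex_le_one hx j
  apply mul_nonneg (hC.1 j i)
  nlinarith

lemma DF_mem_simplex {n : ℕ} {C : Matrix (Fin n) (Fin n) ℝ} (hC : IsRIM C)
    {x : Fin n → ℝ} (hx : x ∈ simplex n) : DF C x ∈ simplex n := by
  constructor
  · intro i
    apply add_nonneg
    · exact Finset.sum_nonneg fun j _ => term_nonneg hC hx j i
    · positivity
  · have : ∑ i, DF C x i = ∑ j, (x j - (x j)^2) * (∑ i, C j i) + ∑ i, (x i)^2 := by
      simp only [DF, Finset.sum_add_distrib, Finset.mul_sum]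
      rw [Finset.sum_comm]
      congr 1
      apply Finset.sum_congr rfl
      intro j _
      apply Finset.sum_congr rfl
      intro i _
      ring
    rw [this]
    simp only [hC.2.1, mul_one]
    have : ∑ j, (x j - (x j)^2) + ∑ i, (x i)^2 = ∑ j, x j := by
      rw [← Finset.sum_add_distrib]
      simp
    rw [this, hx.2]

lemma DF_ge_sq {n : ℕ} {C : Matrix (Fin n) (Fin n) ℝ} (hC : IsRIM C)
    {x : Fin n → ℝ} (hx : x ∈ simplex n) (i : Fin n) : (x i)^2 ≤ DF C x i := by
  have : 0 ≤ ∑ j, C j i * (x j - (x j) ^ 2) :=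
    Finset.sum_nonneg fun j _ => term_nonneg hC hx j i
  simp only [DF]; linarith

lemma DF_ge_term {n : ℕ} {C : Matrix (Fin n) (Fin n) ℝ} (hC : IsRIM C)
    {x : Fin n → ℝ} (hx : x ∈ simplex n) (j i : Fin n) :
    C j i * (x j - (x j) ^ 2) ≤ DF C x i := by
  have h1 : C j i * (x j - (x j) ^ 2) ≤ ∑ k, C k i * (x k - (x k) ^ 2) :=
    Finset.single_le_sum (fun k _ => term_nonneg hC hx k i) (Finset.mem_univ j)
  have h2 : 0 ≤ (x i)^2 := by positivity
  simp only [DF]; linarith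

lemma exists_edge {n : ℕ} {C : Matrix (Fin n) (Fin n) ℝ} (hirr : Irred C)
    (S : Finset (Fin n)) (hne : S.Nonempty) (hnu : S ≠ Finset.univ) :
    ∃ j ∈ S, ∃ i, i ∉ S ∧ C j i ≠ 0 := by
  by_contra h
  push_neg at h
  have key : ∀ k, ∀ j ∈ S, ∀ i, i ∉ S → (C ^ k) j i = 0 := by
    intro k
    induction k with
    | zero =>
      intro j hj i hi
      have : j ≠ i := fun e => hi (e ▸ hj)
      simp [Matrix.one_apply_ne this]
    | succ k ih =>
      intro j hj i hi
      rw [pow_succ, Matrix.mul_apply]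
      apply Finset.sum_eq_zero
      intro l _
      by_cases hl : l ∈ S
      · rw [h l hl i hi, mul_zero]
      · rw [ih j hj l hl, zero_mul]
  obtain ⟨j, hj⟩ := hne
  obtain ⟨i, hi⟩ : ∃ i, i ∉ S := by
    by_contra hc
    push_neg at hc
    exact hnu (Finset.eq_univ_iff_forall.2 hc)
  have hji : j ≠ i := fun e => hi (e ▸ hj)
  obtain ⟨k, _, hk2⟩ := hirr j i hji
  rw [key k j hj i hi] at hk2
  exact lt_irrefl 0 hk2

lemma card_two_lt_one {n : ℕ} {x : Fin n → ℝ} (hx : x ∈ simplex n)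
    {j j' : Fin n} (hjj' : j' ≠ j) (hj' : 0 < x j') : x j < 1 := by
  have : x j + x j' ≤ ∑ i, x i := by
    have := Finset.add_sum_erase Finset.univ x (Finset.mem_univ j)
    rw [← this]
    have hj'm : j' ∈ Finset.univ.erase j := Finset.mem_erase.2 ⟨hjj', Finset.mem_univ j'⟩
    have : x j' ≤ ∑ i ∈ Finset.univ.erase j, x i :=
      Finset.single_le_sum (fun i _ => hx.1 i) hj'm
    linarith
  rw [hx.2] at this
  linarith

lemma not_vertex_two {n : ℕ} {x : Fin n → ℝ} (hx : x ∈ simplex n)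
    (hxv : ∀ i, x ≠ vertex n i) :
    2 ≤ (Finset.univ.filter (fun i => 0 < x i)).card := by
  set S := Finset.univ.filter (fun i => 0 < x i) with hS
  have hSmem : ∀ i, i ∈ S ↔ 0 < x i := by
    intro i; simp [hS]
  have hzero : ∀ i, i ∉ S → x i = 0 := by
    intro i hi
    have := hx.1 i
    rw [hSmem] at hi
    linarith
  have hne : S.Nonempty := by
    by_contra hc
    rw [Finset.not_nonempty_iff_eq_empty] at hc
    have : ∑ i, x i = 0 := Finset.sum_eq_zero fun i _ => hzero i (by simp [hc])
    rw [hx.2] at this; norm_num at this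
  obtain ⟨j, hj⟩ := hne
  by_contra hc
  push_neg at hc
  interval_cases h : S.card
  · simp [Finset.card_eq_zero] at h
    rw [h] at hj; simp at hj
  · rw [Finset.card_eq_one] at h
    obtain ⟨a, ha⟩ := h
    apply hxv a
    have hxa : x a = 1 := by
      have : ∑ i, x i = x a := by
        rw [← Finset.add_sum_erase Finset.univ x (Finset.mem_univ a)]
        have : ∑ i ∈ Finset.univ.erase a, x i = 0 := by
          apply Finset.sum_eq_zero
          intro i hi
          apply hzero
          rw [ha]
          rw [Finset.mem_erase] at hi
          simp [hi.1]
        linarith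
      rw [hx.2] at this; linarith
    funext i
    by_cases hia : i = a
    · simp [vertex, hia, hxa]
    · simp [vertex, hia]
      apply hzero
      rw [ha]; simp [hia]

theorem stmt7 {n : ℕ} (hn : 2 ≤ n) (C : Matrix (Fin n) (Fin n) ℝ) (hC : IsRIM C)
    (hirr : Irred C)
    (x : ℕ → Fin n → ℝ) (hx0 : x 0 ∈ simplex n) (hx0v : ∀ i, x 0 ≠ vertex n i)
    (hrec : ∀ t, x (t + 1) = DF C (x t)) :
    ∀ t, n - 1 ≤ t → ∀ i, 0 < x t i := by
  -- support at time t
  set S : ℕ → Finset (Fin n) := fun t => Finset.univ.filter (fun i => 0 < x t i) with hSdef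
  have hSmem : ∀ t i, i ∈ S t ↔ 0 < x t i := by intro t i; simp [hSdef]
  -- every iterate is in the simplex
  have hsim : ∀ t, x t ∈ simplex n := by
    intro t
    induction t with
    | zero => exact hx0
    | succ t ih => rw [hrec t]; exact DF_mem_simplex hC ih
  -- main induction: card grows
  have key : ∀ t, min n (t + 2) ≤ (S t).card := by
    intro t
    induction t with
    | zero =>
      have := not_vertex_two hx0 hx0v
      simpa [hSdef] using le_trans (min_le_right n 2) this
    | succ t ih =>
      have hcard2 : 2 ≤ (S t).card := le_trans (by omega) ih
      -- support monotone
      have hmono : S t ⊆ S (t + 1) := by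
        intro i hi
        rw [hSmem] at hi ⊢
        rw [hrec t]
        have h1 := DF_ge_sq hC (hsim t) i
        nlinarith
      by_cases hu : S t = Finset.univ
      · have hsub := hmono
        rw [hu] at hsub
        have heq : S (t+1) = Finset.univ := Finset.univ_subset_iff.1 hsub
        rw [heq, Finset.card_univ, Fintype.card_fin]
        omega
      · -- strict growth via an edge leaving S t
        have hne : (S t).Nonempty := Finset.card_pos.1 (by omega)
        obtain ⟨j, hj, i, hiS, hCji⟩ := exists_edge hirr (S t) hne hu
        have hCji' : 0 < C j i := lt_of_le_of_ne (hC.1 j i) (Ne.symm hCji)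
        -- x t j < 1 since there is another positive coordinate
        obtain ⟨j', hj', hjj'⟩ := Finset.exists_mem_ne (by omega : 1 < (S t).card) j
        have hxj1 : x t j < 1 := card_two_lt_one (hsim t) hjj' ((hSmem t j').1 hj')
        have hxj0 : 0 < x t j := (hSmem t j).1 hj
        have hi1 : i ∈ S (t + 1) := by
          rw [hSmem, hrec t]
          have hterm := DF_ge_term hC (hsim t) j i
          have hpos : 0 < C j i * (x t j - (x t j)^2) := mul_pos hCji' (by nlinarith)
          linarith
        have hsub : insert i (S t) ⊆ S (t + 1) := by
          intro a ha
          rcases Finset.mem_insert.1 ha with rfl | ha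
          · exact hi1
          · exact hmono ha
        have := Finset.card_le_card hsub
        rw [Finset.card_insert_of_notMem hiS] at this
        omega
  intro t ht i
  have h1 := key t
  have h2 : (S t).card ≤ n := by
    have := Finset.card_le_univ (S t); simpa using this
  have h3 : (S t).card = n := by omega
  have h4 : S t = Finset.univ := Finset.eq_univ_of_card _ (by simpa using h3)
  have : i ∈ S t := h4 ▸ Finset.mem_univ i
  exact (hSmem t i).1 this
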